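/- Let (c_k)_{k≥1} be any sequence of positive integers and q_{-1} = 0, q_0 = 1, q_k = c_k·q_{k−1} + q_{k−2}. Then for every integer ℓ there exist k₀ ∈ ℕ₀ and a sequence of integers (μ_j)_{j≥−1} such that μ_j = 0 for all j > k₀ and ℓ = Σ_{j=−1}^{k₀} (−1)^j·μ_j·q_j, where the sequence satisfies all of: μ_{−1} ∈ {0,1}; μ_{−1} = 1 if and only if μ_0 = −1; −1 ≤ μ_0 ≤ c_1 − 1; if μ_0 = c_1 − 1 then μ_1 = 0; for every j ≥ 1, 0 ≤ μ_j ≤ c_{j+1} and if μ_j = c_{j+1} then μ_{j+1} = 0. Moreover, if ℓ ∉ {−1, 0, 1}, then μ_{k₀} ≥ 1. -/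

import Mathlib

/-!
Shift the coefficient of `q₀` by one, `ν = μ₀ + 1`, and represent `ℓ + 1` instead of `ℓ`: then
every digit obeys the same rule `0 ≤ νₙ ≤ cₙ`, `νₙ = cₙ → νₙ₊₁ = 0`. Writing `Qₙ = qConv c n`,
the sums with digits in positions `1, …, t` fill an interval of consecutive integers, `[1 - Qₜ, Qₜ₊₁]`
after a reflection at even `t`. This follows by induction on `t`: the top digit `a` is a quotient
by `Qₜ₊₁`, and the remainder must land in the level-`t` interval, shortened to `Qₜ₊₁` consecutive
values when `a ≠ 0` (the previous digit may not be maximal); the identity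
`Qₜ₊₂ = cₜ₊₁ Qₜ₊₁ + Qₜ` makes the pieces tile. As `Qₜ → ∞` every integer is reached, and the last
nonzero digit is positive because only `μ₀` may be negative.
-/

/-- Denominators of the convergents of a continued fraction with digits
`c 1, c 2, …`, with shifted index: `qConv c 0 = q₋₁ = 0`, `qConv c (k+1) = q_k`. -/
def qConv (c : ℕ → ℕ) : ℕ → ℤ
  | 0 => 0
  | 1 => 1
  | (k + 2) => (c (k + 1) : ℤ) * qConv c (k + 1) + qConv c k

namespace Ostrowski

open Finset

variable {c : ℕ → ℕ}

theorem qConv_add_two (c : ℕ → ℕ) (n : ℕ) :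
    qConv c (n + 2) = c (n + 1) * qConv c (n + 1) + qConv c n := rfl

theorem qConv_nonneg_and_succ_pos (hc : ∀ k, 1 ≤ k → 1 ≤ c k) (n : ℕ) :
    0 ≤ qConv c n ∧ 0 < qConv c (n + 1) := by
  induction n with
  | zero => simp [qConv]
  | succ n ih =>
    have hcn : (1 : ℤ) ≤ c (n + 1) := by exact_mod_cast hc (n + 1) n.succ_pos
    exact ⟨ih.2.le, by rw [qConv_add_two]; nlinarith [ih.1, ih.2]⟩

theorem le_qConv_succ (hc : ∀ k, 1 ≤ k → 1 ≤ c k) (n : ℕ) : (n : ℤ) ≤ qConv c (n + 1) := by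
  induction n with
  | zero => simp [qConv]
  | succ n ih =>
    have hcn : (1 : ℤ) ≤ c (n + 1) := by exact_mod_cast hc (n + 1) n.succ_pos
    have hlow : (n : ℤ) + 1 ≤ qConv c (n + 1) + qConv c n := by
      rcases n with _ | n
      · simp [qConv]
      · linarith [(qConv_nonneg_and_succ_pos hc n).2]
    rw [qConv_add_two]
    push_cast
    nlinarith [(qConv_nonneg_and_succ_pos hc n).2]

/-- Digits normalised by `ν 1 = μ_0 + 1`, so that the constraints take the same form at every
index `n ≥ 1`. -/
def IsAdmissibleDigits (c : ℕ → ℕ) (ν : ℕ → ℤ) : Prop :=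
  ∀ n, 1 ≤ n → 0 ≤ ν n ∧ ν n ≤ c n ∧ (ν n = c n → ν (n + 1) = 0)

def ostrowskiSum (c : ℕ → ℕ) (ν : ℕ → ℤ) (t : ℕ) : ℤ :=
  ∑ n ∈ range (t + 1), (-1) ^ (n + 1) * ν n * qConv c n

theorem isAdmissibleDigits_zero : IsAdmissibleDigits c 0 :=
  fun _ _ => ⟨le_rfl, Nat.cast_nonneg _, fun _ => rfl⟩

theorem IsAdmissibleDigits.update {ν : ℕ → ℤ} {t : ℕ} {a : ℤ} (hν : IsAdmissibleDigits c ν)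
    (hsupp : ∀ n, t < n → ν n = 0) (ha₀ : 0 ≤ a) (ha : a ≤ c (t + 1))
    (hchain : a ≠ 0 → 0 < t → ν t < c t) :
    IsAdmissibleDigits c (Function.update ν (t + 1) a) := by
  intro n hn
  by_cases hnt : n = t + 1
  · subst hnt
    simp only [Function.update_self, Function.update_of_ne (by omega : t + 1 + 1 ≠ t + 1)]
    exact ⟨ha₀, ha, fun _ => hsupp _ (by omega)⟩
  rw [Function.update_of_ne hnt]
  refine ⟨(hν n hn).1, (hν n hn).2.1, fun hmax => ?_⟩
  by_cases hnt' : n = t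
  · subst hnt'
    rw [Function.update_self]
    by_contra ha0
    exact (hchain ha0 hn).ne hmax
  · rw [Function.update_of_ne (by omega)]
    exact (hν n hn).2.2 hmax

theorem ostrowskiSum_update_succ (ν : ℕ → ℤ) (t : ℕ) (a : ℤ) :
    ostrowskiSum c (Function.update ν (t + 1) a) (t + 1) =
      ostrowskiSum c ν t + (-1) ^ (t + 2) * a * qConv c (t + 1) := by
  rw [ostrowskiSum, sum_range_succ, Function.update_self, ostrowskiSum]
  congr 1
  refine sum_congr rfl fun n hn => ?_
  rw [Function.update_of_ne (by simp at hn; omega)]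

theorem ostrowskiSum_eq_of_le {ν : ℕ → ℤ} {s t : ℕ} (hst : s ≤ t) (hsupp : ∀ n, s < n → ν n = 0) :
    ostrowskiSum c ν t = ostrowskiSum c ν s := by
  refine (sum_subset (range_subset_range.2 (by omega)) fun n hn hns => ?_).symm
  simp only [mem_range] at hn hns
  rw [hsupp n (by omega), mul_zero, zero_mul]

theorem exists_digit {p q x C : ℤ} (hp : 0 ≤ p) (hq : 0 < q) (hC : 1 ≤ C)
    (hx₁ : 1 - q ≤ x) (hx₂ : x ≤ C * q + p) :
    ∃ a, 0 ≤ a ∧ a ≤ C ∧ 1 - q ≤ x - a * q ∧ x - a * q ≤ p ∧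
      (a ≠ 0 → 1 + p - q ≤ x - a * q) ∧ (x ≤ C * q + p - q → a < C) := by
  by_cases hxp : x ≤ p
  · exact ⟨0, le_rfl, by linarith, by simpa using hx₁, by simpa using hxp,
      fun h => absurd rfl h, fun _ => by linarith⟩
  have h₀ : 0 ≤ (x - p - 1) / q := Int.ediv_nonneg (by linarith) hq.le
  have h₁ : (x - p - 1) / q * q ≤ x - p - 1 := Int.ediv_mul_le _ hq.ne'
  have h₂ : x - p - 1 < ((x - p - 1) / q + 1) * q := Int.lt_ediv_add_one_mul_self _ hq
  refine ⟨(x - p - 1) / q + 1, by linarith, ?_, by nlinarith, by nlinarith, fun _ => by nlinarith,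
    fun hx => ?_⟩
  · by_contra! h
    nlinarith
  · by_contra! h
    nlinarith

/-- The reflection `m ↦ 1 - m` at even `t` (i.e. `2x - 1 = ±(2m - 1)`) turns the range of sums
with digits in `[1, t]` into the same interval `[1 - qConv c t, qConv c (t + 1)]` for every `t`. -/
theorem exists_admissibleDigits_of_bounds (hc : ∀ k, 1 ≤ k → 1 ≤ c k) (t : ℕ) :
    ∀ x m : ℤ, 2 * x - 1 = (-1) ^ (t + 1) * (2 * m - 1) →
      1 - qConv c t ≤ x → x ≤ qConv c (t + 1) →
      ∃ ν, IsAdmissibleDigits c ν ∧ (∀ n, t < n → ν n = 0) ∧ ostrowskiSum c ν t = m ∧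
        (x ≤ qConv c (t + 1) - qConv c t → 0 < t → ν t < c t) := by
  induction t with
  | zero =>
    intro x m hxm hx₁ hx₂
    norm_num [qConv] at hxm hx₁ hx₂
    refine ⟨0, isAdmissibleDigits_zero, fun _ _ => rfl, ?_, fun _ h => absurd h (lt_irrefl 0)⟩
    simp only [ostrowskiSum, Pi.zero_apply, mul_zero, zero_mul, sum_const_zero]
    linarith
  | succ t ih =>
    intro x m hxm hx₁ hx₂
    have hC : (1 : ℤ) ≤ c (t + 1) := by exact_mod_cast hc (t + 1) t.succ_pos
    rw [qConv_add_two] at hx₂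
    obtain ⟨a, ha₀, haC, hr₁, hr₂, hr₃, hr₄⟩ := exists_digit (qConv_nonneg_and_succ_pos hc t).1
      (qConv_nonneg_and_succ_pos hc t).2 hC hx₁ hx₂
    have hsign : ((-1 : ℤ) ^ (t + 1)) * (-1) ^ (t + 1) = 1 := by
      rw [← pow_add]; exact Even.neg_one_pow ⟨t + 1, rfl⟩
    obtain ⟨ν, hν, hsupp, hsum, htop⟩ := ih (1 - (x - a * qConv c (t + 1)))
      (m - (-1) ^ (t + 2) * a * qConv c (t + 1))
      (by rw [pow_succ] at hxm ⊢; linear_combination (-1 : ℤ) * hxm - 2 * a * qConv c (t + 1) * hsign)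
      (by linarith) (by linarith)
    refine ⟨Function.update ν (t + 1) a,
      hν.update hsupp ha₀ haC fun ha ht => htop (by linarith [hr₃ ha]) ht, fun n hn => ?_, ?_,
      fun hx _ => ?_⟩
    · rw [Function.update_of_ne (by omega)]
      exact hsupp n (by omega)
    · rw [ostrowskiSum_update_succ, hsum]
      ring
    · rw [Function.update_self]
      exact hr₄ (by rw [qConv_add_two] at hx; linarith)

theorem exists_last_ne_zero {M : Type*} [Zero M] {f : ℕ → M} {t : ℕ} (ht : 1 ≤ t)
    (hf : ∀ n, t < n → f n = 0) :
    ∃ k, k + 1 ≤ t ∧ (∀ n, k + 1 < n → f n = 0) ∧ (1 ≤ k → f (k + 1) ≠ 0) := by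
  induction t, ht using Nat.le_induction with
  | base => exact ⟨0, le_rfl, hf, fun h => absurd h (by omega)⟩
  | succ t ht ih =>
    by_cases hlast : f (t + 1) = 0
    · obtain ⟨k, hkt, hk, hkf⟩ := ih fun n hn => by
        rcases (Nat.succ_le_of_lt hn).eq_or_lt with rfl | hn'
        · exact hlast
        · exact hf n hn'
      exact ⟨k, by omega, hk, hkf⟩
    · exact ⟨t, le_rfl, hf, fun _ => hlast⟩

theorem exists_admissibleDigits_ostrowskiSum_eq (hc : ∀ k, 1 ≤ k → 1 ≤ c k) (m : ℤ) :
    ∃ k₀ ν, IsAdmissibleDigits c ν ∧ (∀ n, k₀ + 1 < n → ν n = 0) ∧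
      (1 ≤ k₀ → ν (k₀ + 1) ≠ 0) ∧ ostrowskiSum c ν (k₀ + 1) = m := by
  have hQ₁ : ((2 * m.natAbs + 2 : ℕ) : ℤ) ≤ qConv c (2 * m.natAbs + 3) := le_qConv_succ hc _
  have hQ₂ : ((2 * m.natAbs + 3 : ℕ) : ℤ) ≤ qConv c (2 * m.natAbs + 3 + 1) := le_qConv_succ hc _
  have hm : |m| = m.natAbs := Int.abs_eq_natAbs m
  obtain ⟨ν, hν, hsupp, hsum, -⟩ := exists_admissibleDigits_of_bounds hc (2 * m.natAbs + 3) m m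
    (by rw [Even.neg_one_pow ⟨m.natAbs + 2, by ring⟩, one_mul])
    (by push_cast at hQ₁; linarith [neg_abs_le m]) (by push_cast at hQ₂; linarith [le_abs_self m])
  obtain ⟨k₀, hk₀t, hk₀, hlast⟩ := exists_last_ne_zero (by omega) hsupp
  exact ⟨k₀, ν, hν, hk₀, hlast, by rw [← ostrowskiSum_eq_of_le hk₀t hk₀, hsum]⟩

/-- The admissibility conditions of `M_α` on `μ_{-1}, μ_0, μ_1, …`, stored as `μ 0, μ 1, μ 2, …`. -/
def IsAdmissibleCoeffs (c : ℕ → ℕ) (μ : ℕ → ℤ) : Prop :=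
  (μ 0 = 0 ∨ μ 0 = 1) ∧ (μ 0 = 1 ↔ μ 1 = -1) ∧ (-1 ≤ μ 1 ∧ μ 1 ≤ (c 1 : ℤ) - 1) ∧
    (μ 1 = (c 1 : ℤ) - 1 → μ 2 = 0) ∧
    (∀ n, 2 ≤ n → 0 ≤ μ n ∧ μ n ≤ (c n : ℤ) ∧ (μ n = (c n : ℤ) → μ (n + 1) = 0))

def toCoeffs (ν : ℕ → ℤ) : ℕ → ℤ
  | 0 => if ν 1 = 0 then 1 else 0
  | 1 => ν 1 - 1
  | n + 2 => ν (n + 2)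

theorem IsAdmissibleDigits.isAdmissibleCoeffs_toCoeffs {ν : ℕ → ℤ} (hν : IsAdmissibleDigits c ν) :
    IsAdmissibleCoeffs c (toCoeffs ν) := by
  obtain ⟨h₀, hc₁, hchain⟩ := hν 1 le_rfl
  refine ⟨?_, ?_, ⟨by simp only [toCoeffs]; linarith, by simp only [toCoeffs]; linarith⟩,
    fun h => hchain (by simp only [toCoeffs] at h; linarith), fun n hn => ?_⟩
  · simp only [toCoeffs]; split_ifs <;> simp
  · simp only [toCoeffs]; split_ifs with h <;> simp [h]
  · obtain ⟨n, rfl⟩ := Nat.exists_eq_add_of_le' hn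
    exact hν (n + 2) (by omega)

theorem ostrowskiSum_toCoeffs (ν : ℕ → ℤ) {t : ℕ} (ht : 1 ≤ t) :
    ostrowskiSum c (toCoeffs ν) t = ostrowskiSum c ν t - 1 := by
  induction t, ht using Nat.le_induction with
  | base => simp [ostrowskiSum, sum_range_succ, qConv, toCoeffs]
  | succ t ht ih =>
    obtain ⟨t, rfl⟩ := Nat.exists_eq_add_of_le' ht
    unfold ostrowskiSum at ih ⊢
    rw [sum_range_succ, ih, sum_range_succ _ (t + 1 + 1)]
    simp only [toCoeffs]
    ring

theorem ostrowskiSum_one (ν : ℕ → ℤ) : ostrowskiSum c ν 1 = ν 1 := by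
  simp [ostrowskiSum, sum_range_succ, qConv]

end Ostrowski

/-- `μ n` stands for the paper's `μ_{n−1}` and `qConv c n` for `q_{n−1}`, so `μ 0 = μ₋₁`. -/
theorem integer_as_admissible_combination (c : ℕ → ℕ) (hc : ∀ k, 1 ≤ k → 1 ≤ c k)
    (ℓ : ℤ) :
    ∃ (k₀ : ℕ) (μ : ℕ → ℤ),
      (∀ n, k₀ + 1 < n → μ n = 0) ∧
      ℓ = ∑ n ∈ Finset.range (k₀ + 2), (-1) ^ (n + 1) * μ n * qConv c n ∧
      (μ 0 = 0 ∨ μ 0 = 1) ∧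
      (μ 0 = 1 ↔ μ 1 = -1) ∧
      (-1 ≤ μ 1 ∧ μ 1 ≤ (c 1 : ℤ) - 1) ∧
      (μ 1 = (c 1 : ℤ) - 1 → μ 2 = 0) ∧
      (∀ n, 2 ≤ n → 0 ≤ μ n ∧ μ n ≤ (c n : ℤ) ∧ (μ n = (c n : ℤ) → μ (n + 1) = 0)) ∧
      ((ℓ ≠ -1 ∧ ℓ ≠ 0 ∧ ℓ ≠ 1) → 1 ≤ μ (k₀ + 1)) := by
  obtain ⟨k₀, ν, hν, hsupp, hlast, hsum⟩ :=
    Ostrowski.exists_admissibleDigits_ostrowskiSum_eq hc (ℓ + 1)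
  obtain ⟨h₀, h₀₁, h₁, h₁₂, hₙ⟩ := hν.isAdmissibleCoeffs_toCoeffs
  refine ⟨k₀, Ostrowski.toCoeffs ν, fun n hn => ?_, ?_, h₀, h₀₁, h₁, h₁₂, hₙ, fun hℓ => ?_⟩
  · obtain ⟨n, rfl⟩ := Nat.exists_eq_add_of_le' (by omega : 2 ≤ n)
    exact hsupp _ hn
  · have := Ostrowski.ostrowskiSum_toCoeffs (c := c) ν k₀.succ_pos
    rw [hsum, add_sub_cancel_right] at this
    exact this.symm
  · rcases k₀ with _ | k
    · rw [Ostrowski.ostrowskiSum_one] at hsum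
      have : Ostrowski.toCoeffs ν 1 = ℓ := by rw [Ostrowski.toCoeffs, hsum, add_sub_cancel_right]
      show 1 ≤ Ostrowski.toCoeffs ν 1
      omega
    · exact (hₙ (k + 2) (by omega)).1.lt_of_ne' (hlast (by omega))
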